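/- For every integer k ≥ 3, every odd positive integer m with m > 3k - 4 lies in F(k); that is, Γ(k) ≤ 3k - 4, where Γ(k) is the largest odd positive integer not in F(k). -/

import Mathlib

/-!
The Thue–Morse word satisfies `t(2n) = t(n)` and `t(2n+1) = 1 - t(n)`, and it is recognizable:
a factor of length 4 determines the parity of its starting position (otherwise some
`t(j) = t(j+1) = t(j+2)`, while equal neighbours only occur at odd positions). Desubstituting
`d` times, two equal factors of length `m` with `3 · 2^d < 2m` start at positions congruent
modulo `2^d`. The blocks `i` and `j` of length `m` start at `i m` and `j m`; for odd `m` this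
forces `i ≡ j [MOD 2^d]`, hence `i = j` as soon as `k ≤ 2^d`. For the least such power `2^d`
and odd `m > 3k - 4` the length condition `3 · 2^d < 2m` holds.
-/

open Filter

/-- The Thue-Morse word, indexed from 1: `tm i` is the parity of the number of
1's in the binary expansion of `i - 1`. -/
def tm (i : ℕ) : ℕ := (Nat.digits 2 (i - 1)).sum % 2

/-- The factor `t_a t_{a+1} ⋯ t_b` of the Thue-Morse word. -/
def seg (a b : ℕ) : List ℕ := (List.range (b + 1 - a)).map (fun j => tm (a + j))

/-- The `i`-th block of length `m` of the Thue-Morse word (blocks indexed from 0):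
`t_{im+1} ⋯ t_{(i+1)m}`. -/
def block (m i : ℕ) : List ℕ := seg (i * m + 1) ((i + 1) * m)

/-- The prefix of the Thue-Morse word of length `k * m` is a `k`-anti-power:
its `k` consecutive blocks of length `m` are pairwise distinct. -/
def IsAntiPowerPrefix (m k : ℕ) : Prop :=
  ∀ i j, i < k → j < k → i ≠ j → block m i ≠ block m j

/-- `w` is a factor (contiguous substring) of the Thue-Morse word. -/
def IsFactor (w : List ℕ) : Prop :=
  ∃ a : ℕ, w = (List.range w.length).map (fun j => tm (a + 1 + j))

/-- `δ(m) = ⌈log₂ (m/3)⌉` (a nonnegative integer for `m ≥ 2`). -/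
noncomputable def delta (m : ℕ) : ℕ := (⌈Real.logb 2 ((m : ℝ) / 3)⌉).toNat

/-- `⌈log₂ m⌉`. -/
noncomputable def ell (m : ℕ) : ℕ := (⌈Real.logb 2 (m : ℝ)⌉).toNat

/-- `K(m)`: the smallest `k` such that the prefix of the Thue-Morse word of
length `k * m` is not a `k`-anti-power. -/
noncomputable def Kap (m : ℕ) : ℕ := sInf {k | ¬ IsAntiPowerPrefix m k}

/-- `γ(k)`: the smallest odd positive integer `m` such that the prefix of the
Thue-Morse word of length `k * m` is a `k`-anti-power. -/
noncomputable def gam (k : ℕ) : ℕ := sInf {m | Odd m ∧ IsAntiPowerPrefix m k}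

/-- `Γ(k)`: the largest odd positive integer `m` such that the prefix of the
Thue-Morse word of length `k * m` is not a `k`-anti-power. -/
noncomputable def Gam (k : ℕ) : ℕ := sSup {m | Odd m ∧ ¬ IsAntiPowerPrefix m k}

/-- The Thue-Morse morphism `μ` (0 ↦ 01, 1 ↦ 10) on words. -/
def mu (w : List ℕ) : List ℕ := w.flatMap (fun a => if a = 0 then [0, 1] else [1, 0])

def thueMorse (n : ℕ) : ℕ := (Nat.digits 2 n).sum % 2

lemma tm_succ (n : ℕ) : tm (n + 1) = thueMorse n := rfl

lemma thueMorse_lt_two (n : ℕ) : thueMorse n < 2 := Nat.mod_lt _ two_pos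

lemma thueMorse_two_mul (n : ℕ) : thueMorse (2 * n) = thueMorse n := by
  rcases Nat.eq_zero_or_pos n with rfl | hn
  · rfl
  · rw [thueMorse, Nat.digits_def' one_lt_two (by omega)]
    simp [thueMorse]

lemma thueMorse_two_mul_add_one (n : ℕ) : thueMorse (2 * n + 1) = 1 - thueMorse n := by
  have h := thueMorse_lt_two n
  unfold thueMorse at *
  rw [Nat.digits_def' one_lt_two (by omega), List.sum_cons, show (2 * n + 1) % 2 = 1 by omega,
    show (2 * n + 1) / 2 = n by omega]
  omega

lemma thueMorse_eq_of_two_mul_add_eq {x y e : ℕ} (he : e < 2)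
    (h : thueMorse (2 * x + e) = thueMorse (2 * y + e)) : thueMorse x = thueMorse y := by
  interval_cases e
  · simpa only [add_zero, thueMorse_two_mul] using h
  · have := thueMorse_lt_two x
    have := thueMorse_lt_two y
    rw [thueMorse_two_mul_add_one, thueMorse_two_mul_add_one] at h
    omega

lemma odd_of_thueMorse_eq_succ {j : ℕ} (h : thueMorse j = thueMorse (j + 1)) : Odd j := by
  rw [Nat.odd_iff]
  by_contra hj
  obtain ⟨i, rfl⟩ : ∃ i, j = 2 * i := ⟨j / 2, by omega⟩
  have := thueMorse_lt_two i
  rw [thueMorse_two_mul, thueMorse_two_mul_add_one] at h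
  omega

lemma thueMorse_not_cube (j : ℕ) :
    ¬ (thueMorse j = thueMorse (j + 1) ∧ thueMorse (j + 1) = thueMorse (j + 2)) := by
  rintro ⟨h₀, h₁⟩
  exact Nat.odd_add_one.mp (odd_of_thueMorse_eq_succ h₁) (odd_of_thueMorse_eq_succ h₀)

lemma mod_two_eq_of_thueMorse_factor_four {a b : ℕ}
    (h : ∀ r < 4, thueMorse (a + r) = thueMorse (b + r)) : a % 2 = b % 2 := by
  by_contra hne
  wlog ha : a % 2 = 0 generalizing a b
  · exact this (fun r hr => (h r hr).symm) (Ne.symm hne) (by omega)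
  obtain ⟨i, rfl⟩ : ∃ i, a = 2 * i := ⟨a / 2, by omega⟩
  obtain ⟨j, rfl⟩ : ∃ j, b = 2 * j + 1 := ⟨b / 2, by omega⟩
  have h₀ : thueMorse (2 * i) = thueMorse (2 * j + 1) := h 0 (by norm_num)
  have h₁ : thueMorse (2 * i + 1) = thueMorse (2 * (j + 1)) := h 1 (by norm_num)
  have h₂ : thueMorse (2 * (i + 1)) = thueMorse (2 * (j + 1) + 1) := h 2 (by norm_num)
  have h₃ : thueMorse (2 * (i + 1) + 1) = thueMorse (2 * (j + 2)) := h 3 (by norm_num)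
  simp only [thueMorse_two_mul, thueMorse_two_mul_add_one] at h₀ h₁ h₂ h₃
  have := thueMorse_lt_two i
  have := thueMorse_lt_two (i + 1)
  have := thueMorse_lt_two j
  have := thueMorse_lt_two (j + 1)
  exact thueMorse_not_cube j ⟨by omega, by omega⟩

lemma thueMorse_factor_div_two {m a b : ℕ} (hab : a % 2 = b % 2)
    (h : ∀ r < m, thueMorse (a + r) = thueMorse (b + r)) :
    ∀ r < (m + 1) / 2, thueMorse (a / 2 + r) = thueMorse (b / 2 + r) := by
  intro r hr
  have h₂ := h (2 * r) (by omega)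
  rw [show a + 2 * r = 2 * (a / 2 + r) + a % 2 by omega,
    show b + 2 * r = 2 * (b / 2 + r) + a % 2 by omega] at h₂
  exact thueMorse_eq_of_two_mul_add_eq (Nat.mod_lt _ two_pos) h₂

theorem modEq_of_thueMorse_factor (d : ℕ) {m a b : ℕ} (hm : 3 * 2 ^ d < 2 * m)
    (h : ∀ r < m, thueMorse (a + r) = thueMorse (b + r)) : a ≡ b [MOD 2 ^ d] := by
  induction d generalizing m a b with
  | zero => exact Nat.modEq_one
  | succ d ih =>
    have hpow : 2 ^ (d + 1) = 2 * 2 ^ d := by ring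
    have := Nat.one_le_two_pow (n := d)
    have hab : a % 2 = b % 2 :=
      mod_two_eq_of_thueMorse_factor_four fun r hr => h r (by omega)
    have hhalf : a / 2 ≡ b / 2 [MOD 2 ^ d] :=
      ih (by omega) (thueMorse_factor_div_two hab h)
    rw [← Nat.div_add_mod a 2, ← Nat.div_add_mod b 2, hab, hpow]
    exact (hhalf.mul_left' 2).add_right _

lemma thueMorse_factor_of_block_eq {m i j : ℕ} (h : block m i = block m j) :
    ∀ r < m, thueMorse (i * m + r) = thueMorse (j * m + r) := by
  have hblock : ∀ n, block m n = (List.range m).map fun r => thueMorse (n * m + r) := by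
    intro n
    rw [block, seg, show (n + 1) * m + 1 - (n * m + 1) = m by rw [add_mul]; omega]
    exact List.map_congr_left fun r _ => by
      rw [show n * m + 1 + r = n * m + r + 1 by omega, tm_succ]
  rw [hblock, hblock, List.map_inj_left] at h
  exact fun r hr => h r (List.mem_range.mpr hr)

theorem isAntiPowerPrefix_of_odd {m k d : ℕ} (hm : Odd m) (hmd : 3 * 2 ^ d < 2 * m)
    (hk : k ≤ 2 ^ d) : IsAntiPowerPrefix m k := by
  intro i j hi hj hne heq
  have hcop : Nat.gcd (2 ^ d) m = 1 :=
    Nat.Coprime.pow_left d (Nat.coprime_two_left.mpr hm)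
  have hij : i ≡ j [MOD 2 ^ d] := Nat.ModEq.cancel_right_of_coprime hcop
    (modEq_of_thueMorse_factor d hmd (thueMorse_factor_of_block_eq heq))
  rw [Nat.ModEq, Nat.mod_eq_of_lt (by omega), Nat.mod_eq_of_lt (by omega)] at hij
  exact hne hij

lemma three_mul_two_pow_clog_lt {k m : ℕ} (hk : 3 ≤ k) (hm : Odd m) (hkm : 3 * k - 4 < m) :
    3 * 2 ^ Nat.clog 2 k < 2 * m := by
  have hle : k ≤ 2 ^ Nat.clog 2 k := Nat.le_pow_clog one_lt_two k
  have hlt : 2 ^ (Nat.clog 2 k).pred < k := Nat.pow_pred_clog_lt_self one_lt_two (by omega)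
  obtain ⟨e, he⟩ : ∃ e, Nat.clog 2 k = e + 2 := by
    refine ⟨Nat.clog 2 k - 2, ?_⟩
    by_contra h
    have : 2 ^ Nat.clog 2 k ≤ 2 ^ 1 := Nat.pow_le_pow_right two_pos (by omega)
    omega
  rw [he, pow_add] at hle ⊢
  rw [he, Nat.pred_succ, pow_succ] at hlt
  obtain ⟨c, rfl⟩ := hm
  omega

theorem stmt9 (k : ℕ) (hk : 3 ≤ k) :
    (∀ m : ℕ, Odd m → 3 * k - 4 < m → IsAntiPowerPrefix m k) ∧ Gam k ≤ 3 * k - 4 := by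
  have hF : ∀ m : ℕ, Odd m → 3 * k - 4 < m → IsAntiPowerPrefix m k := fun m hm hkm =>
    isAntiPowerPrefix_of_odd hm (three_mul_two_pow_clog_lt hk hm hkm)
      (Nat.le_pow_clog one_lt_two k)
  refine ⟨hF, csSup_le' fun m ⟨hm, hnot⟩ => ?_⟩
  by_contra hlt
  exact hnot (hF m hm (by omega))
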